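/- Fix p ∈ (0,1) and m ≥ 1. Let G̃ be the random connected graph on [m] generated as follows: choose a random tree T̃ on [m] with probability proportional to (1-p)^{-a(T)}, then independently include each of the a(T̃) edges permitted by oDFS(T̃) with probability p. Then G̃ has the same distribution as a connected graph on [m] with probability proportional to p^{s(G)} (1-p)^{-s(G)}, i.e., the same distribution as a connected component of G(n,p) conditioned to have m vertices (relabeled by [m]). -/

import Mathlib

/-!
Running oDFS on a connected graph `G` yields its depth-first tree `T(G)`, and oDFS runs on
`T(G)` exactly as on `G`. Every edge of `G` outside `T(G)` is permitted by `T(G)`: when its first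
endpoint is explored, the other one is already open. Conversely, adding to a tree `T` any set `E`
of permitted edges does not change the run, since a permitted edge only joins vertices that are
both seen by the time either is explored. So the connected graphs with depth-first tree `T` are
exactly the graphs `T ⊔ E`, with surplus `|E|`. The permitted edges of `T` are the pairs formed by
the head of the stack `O_i` and another vertex of `O_i`, so there are `a(T)` of them, and summing
`(p / (1 - p)) ^ s(G)` over the fibre of `T` gives `(1 - p) ^ (-a(T))`. Hence both distributions
have the same normalising constant, and the two-stage probability of `G` is
`(1 - p) ^ (-a) * p ^ s * (1 - p) ^ (a - s) / Z = p ^ s * (1 - p) ^ (-s) / Z`.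
-/

open scoped Classical
noncomputable section

namespace RandomGraphs

variable {n : ℕ}

/-- One step of ordered depth-first search (oDFS): the state is the pair
(stack of open vertices, set of explored vertices). The first vertex of the
stack is explored: it is removed and its unseen neighbors are prepended to the
stack in increasing order. -/
def dfsStep (G : SimpleGraph (Fin n)) :
    List (Fin n) × Finset (Fin n) → List (Fin n) × Finset (Fin n) :=
  fun st =>
    match st with
    | ([], A) => ([], A)
    | (v :: rest, A) =>
        (((G.neighborFinset v).filter
            (fun w => w ∉ A ∧ w ∉ (v :: rest))).sort (· ≤ ·) ++ rest,
          insert v A)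

/-- The oDFS state at time `i`, started from the stack containing only vertex `0`
(the vertex with smallest label). -/
def dfsState (G : SimpleGraph (Fin n)) (i : ℕ) :
    List (Fin n) × Finset (Fin n) :=
  (dfsStep G)^[i] ((List.finRange n).take 1, ∅)

/-- The stack `O_i` of open vertices at time `i`. -/
def stackAt (G : SimpleGraph (Fin n)) (i : ℕ) : List (Fin n) :=
  (dfsState G i).1

/-- The depth-first walk `X(i) = |O_i| - 1` of a connected graph. -/
def dfw (G : SimpleGraph (Fin n)) (i : ℕ) : ℕ :=
  (stackAt G i).length - 1

/-- The area `a(T) = Σ_{i=1}^{n-1} X(i)` of a tree. -/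
def area (G : SimpleGraph (Fin n)) : ℕ :=
  ∑ i ∈ Finset.Ico 1 n, dfw G i

/-- The set of (unordered) edges permitted by oDFS run on `T`: non-edges `uv`
of `T` such that both `u` and `v` lie in the stack `O_i` for some `i < n`. -/
def permittedSet (T : SimpleGraph (Fin n)) : Set (Sym2 (Fin n)) :=
  {e | ∃ u v : Fin n, e = s(u, v) ∧ u ≠ v ∧ ¬ T.Adj u v ∧
    ∃ i < n, u ∈ stackAt T i ∧ v ∈ stackAt T i}

/-- The set of neighbors of the currently explored vertex which have not been
seen before (these become new open vertices, and the corresponding edges are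
the tree edges discovered at time `i`). -/
def newNbrs (G : SimpleGraph (Fin n)) (i : ℕ) : Finset (Fin n) :=
  match dfsState G i with
  | ([], _) => ∅
  | (v :: rest, A) => (G.neighborFinset v).filter (fun w => w ∉ A ∧ w ∉ (v :: rest))

/-- The depth-first tree `T(G)` of a connected graph `G`: its edges join
the vertex explored at step `i` to each of its previously-unseen neighbors. -/
def dfTree (G : SimpleGraph (Fin n)) : SimpleGraph (Fin n) :=
  SimpleGraph.fromRel (fun u v =>
    ∃ i < n, (stackAt G i).head? = some u ∧ v ∈ newNbrs G i)

/-- The surplus `s(G) = |E(G)| - (n-1)` of a graph on `[n]`. -/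
def surplus (G : SimpleGraph (Fin n)) : ℤ :=
  (G.edgeSet.ncard : ℤ) - ((n : ℤ) - 1)

/-- The (unnormalized) weight `(1-p)^{-a(T)}` of the tilted tree distribution. -/
def treeWeight (p : ℝ) (T : SimpleGraph (Fin n)) : ℝ :=
  (1 - p) ^ (-(area T : ℤ))

/-- The probability that the two-stage procedure (pick a tree `T̃` with
probability proportional to `(1-p)^{-a(T)}`, then add each of the `a(T̃)`
permitted edges independently with probability `p`) produces the connected
graph `G`: the tree it must pick is `T(G)`, and then it must add exactly the
`s(G)` surplus edges of `G` among the `a(T(G))` permitted ones. -/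
def twoStageProb (p : ℝ) (G : SimpleGraph (Fin n)) : ℝ :=
  (treeWeight p (dfTree G) /
      ∑ T ∈ Finset.univ.filter (fun T : SimpleGraph (Fin n) => T.IsTree),
        treeWeight p T) *
    p ^ surplus G * (1 - p) ^ ((area (dfTree G) : ℤ) - surplus G)

end RandomGraphs

namespace SimpleGraph

variable {V : Type*}

lemma sup_fromEdgeSet_sdiff {T G : SimpleGraph V} (h : T ≤ G) :
    T ⊔ fromEdgeSet (G.edgeSet \ T.edgeSet) = G := by
  ext v w
  simp only [sup_adj, fromEdgeSet_adj, Set.mem_sdiff, mem_edgeSet]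
  refine ⟨fun h' => h'.elim (fun hT => h hT) fun hG => hG.1.1, fun hG => ?_⟩
  by_cases hT : T.Adj v w
  · exact Or.inl hT
  · exact Or.inr ⟨⟨hG, hT⟩, hG.ne⟩

lemma edgeSet_sup_fromEdgeSet_sdiff {T : SimpleGraph V} {S : Set (Sym2 V)}
    (hS : ∀ e ∈ S, e ∉ T.edgeSet ∧ ¬ e.IsDiag) :
    (T ⊔ fromEdgeSet S).edgeSet \ T.edgeSet = S := by
  ext e
  simp only [edgeSet_sup, edgeSet_fromEdgeSet, Set.mem_sdiff, Set.mem_union, Sym2.mem_diagSet]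
  exact ⟨fun ⟨h, hT⟩ => (h.resolve_left hT).1,
    fun he => ⟨Or.inr ⟨he, (hS e he).2⟩, (hS e he).1⟩⟩

end SimpleGraph

namespace RandomGraphs

open SimpleGraph

variable {n : ℕ}

section Exploration

variable {G : SimpleGraph (Fin n)} {i j : ℕ} {u v w : Fin n} {r : List (Fin n)}
  {A : Finset (Fin n)}

def seenAt (G : SimpleGraph (Fin n)) (i : ℕ) : Finset (Fin n) :=
  (dfsState G i).2 ∪ (stackAt G i).toFinset

lemma dfsState_succ (G : SimpleGraph (Fin n)) (i : ℕ) :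
    dfsState G (i + 1) = dfsStep G (dfsState G i) :=
  Function.iterate_succ_apply' _ _ _

lemma explored_zero (G : SimpleGraph (Fin n)) : (dfsState G 0).2 = ∅ := rfl

lemma head_stackAt_zero_of_mem (h : v ∈ stackAt G 0) : (stackAt G 0).head? = some v := by
  simpa [stackAt, dfsState, List.take_one] using h

lemma dfsState_eq_cons_of_stackAt (h : stackAt G i = v :: r) :
    dfsState G i = (v :: r, (dfsState G i).2) := by
  rw [← h]; rfl

lemma dfsState_succ_of_eq_cons (h : dfsState G i = (v :: r, A)) :
    dfsState G (i + 1) =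
      (((G.neighborFinset v).filter (fun w => w ∉ A ∧ w ∉ v :: r)).sort (· ≤ ·) ++ r,
        insert v A) := by
  rw [dfsState_succ, h]; rfl

lemma dfsState_succ_of_stackAt_eq_nil (h : stackAt G i = []) :
    dfsState G (i + 1) = dfsState G i := by
  have h' : dfsState G i = ([], (dfsState G i).2) := by rw [← h]; rfl
  rw [dfsState_succ, h']; rfl

lemma newNbrs_of_eq_cons (h : dfsState G i = (v :: r, A)) :
    newNbrs G i = (G.neighborFinset v).filter (fun w => w ∉ A ∧ w ∉ v :: r) := by
  unfold newNbrs; rw [h]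

lemma newNbrs_of_stackAt_eq_nil (h : stackAt G i = []) : newNbrs G i = ∅ := by
  have h' : dfsState G i = ([], (dfsState G i).2) := by rw [← h]; rfl
  unfold newNbrs; rw [h']

lemma mem_newNbrs_iff : w ∈ newNbrs G i ↔
    ∃ v r A, dfsState G i = (v :: r, A) ∧ G.Adj v w ∧ w ∉ A ∧ w ∉ v :: r := by
  rcases hst : dfsState G i with ⟨_ | ⟨v, r⟩, A⟩
  · simp [newNbrs_of_stackAt_eq_nil (show stackAt G i = [] by rw [stackAt, hst])]
  · simp [newNbrs_of_eq_cons hst]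

lemma stackAt_succ_of_eq_cons (h : dfsState G i = (v :: r, A)) :
    stackAt G (i + 1) = (newNbrs G i).sort (· ≤ ·) ++ r := by
  rw [stackAt, dfsState_succ_of_eq_cons h, newNbrs_of_eq_cons h]

lemma seenAt_succ (G : SimpleGraph (Fin n)) (i : ℕ) :
    seenAt G (i + 1) = seenAt G i ∪ newNbrs G i := by
  rcases hst : dfsState G i with ⟨_ | ⟨v, r⟩, A⟩
  · have h : stackAt G i = [] := by rw [stackAt, hst]
    rw [seenAt, seenAt, stackAt, stackAt, dfsState_succ_of_stackAt_eq_nil h,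
      newNbrs_of_stackAt_eq_nil h, Finset.union_empty]
  · ext x
    rw [seenAt, seenAt, stackAt_succ_of_eq_cons hst, dfsState_succ_of_eq_cons hst, stackAt, hst]
    simp only [Finset.mem_union, Finset.mem_insert, List.mem_toFinset, List.mem_append,
      List.mem_cons, Finset.mem_sort]
    tauto

lemma seenAt_mono (G : SimpleGraph (Fin n)) : Monotone (seenAt G) :=
  monotone_nat_of_le_succ fun i => (seenAt_succ G i).symm ▸ Finset.subset_union_left

lemma explored_mono (G : SimpleGraph (Fin n)) : Monotone fun i => (dfsState G i).2 := by
  refine monotone_nat_of_le_succ fun i => ?_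
  rcases hst : dfsState G i with ⟨_ | ⟨v, r⟩, A⟩
  · rw [dfsState_succ_of_stackAt_eq_nil (by rw [stackAt, hst]), hst]
  · simp only [dfsState_succ_of_eq_cons hst]
    exact Finset.subset_insert _ _

lemma exists_mem_newNbrs_of_mem_seenAt (h₀ : v ∉ seenAt G 0) (hj : v ∈ seenAt G j) :
    ∃ k < j, v ∈ newNbrs G k := by
  induction j with
  | zero => exact absurd hj h₀
  | succ j ih =>
    rw [seenAt_succ, Finset.mem_union] at hj
    rcases hj with hj | hj
    · obtain ⟨k, hk, hv⟩ := ih hj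
      exact ⟨k, by omega, hv⟩
    · exact ⟨j, by omega, hj⟩

lemma notMem_seenAt_of_mem_newNbrs (h : w ∈ newNbrs G i) : w ∉ seenAt G i := by
  obtain ⟨v, r, A, hst, -, hA, hs⟩ := mem_newNbrs_iff.1 h
  simpa [seenAt, stackAt, hst, hA] using hs

lemma mem_stackAt_succ_of_mem_newNbrs (h : w ∈ newNbrs G i) : w ∈ stackAt G (i + 1) := by
  obtain ⟨v, r, A, hst, -⟩ := mem_newNbrs_iff.1 h
  simp [stackAt_succ_of_eq_cons hst, h]

lemma eq_of_mem_newNbrs (hi : w ∈ newNbrs G i) (hj : w ∈ newNbrs G j) : i = j := by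
  by_contra hne
  wlog hlt : i < j generalizing i j
  · exact this hj hi (Ne.symm hne) (by omega)
  refine notMem_seenAt_of_mem_newNbrs hj (seenAt_mono G (show i + 1 ≤ j from hlt) ?_)
  simp [seenAt, mem_stackAt_succ_of_mem_newNbrs hi]

lemma stackAt_nodup_and_disjoint (G : SimpleGraph (Fin n)) (i : ℕ) :
    (stackAt G i).Nodup ∧ ∀ v ∈ stackAt G i, v ∉ (dfsState G i).2 := by
  induction i with
  | zero => exact ⟨(List.take_sublist _ _).nodup (List.nodup_finRange n), by simp [dfsState]⟩
  | succ i ih =>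
    rcases hst : dfsState G i with ⟨_ | ⟨v, r⟩, A⟩
    · rwa [stackAt, dfsState_succ_of_stackAt_eq_nil (by rw [stackAt, hst])]
    · rw [stackAt, hst] at ih
      obtain ⟨hnd, hA⟩ := ih
      obtain ⟨hvr, hr⟩ := List.nodup_cons.1 hnd
      have hnew : ∀ w ∈ newNbrs G i, w ∉ A ∧ w ∉ v :: r := fun w hw => by
        rw [newNbrs_of_eq_cons hst] at hw
        exact (Finset.mem_filter.1 hw).2
      rw [stackAt_succ_of_eq_cons hst, dfsState_succ_of_eq_cons hst]
      refine ⟨List.nodup_append.2 ⟨Finset.sort_nodup _ _, hr, fun x hx y hy hxy => ?_⟩,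
        fun x hx => ?_⟩
      · rw [Finset.mem_sort] at hx
        exact (hnew x hx).2 (hxy ▸ List.mem_cons_of_mem _ hy)
      · rw [Finset.mem_insert, not_or]
        rcases List.mem_append.1 hx with hx | hx
        · rw [Finset.mem_sort] at hx
          exact ⟨fun h => (hnew x hx).2 (h ▸ List.mem_cons_self), (hnew x hx).1⟩
        · exact ⟨fun h => hvr (h ▸ hx), hA x (List.mem_cons_of_mem _ hx)⟩

lemma stackAt_nodup (G : SimpleGraph (Fin n)) (i : ℕ) : (stackAt G i).Nodup :=
  (stackAt_nodup_and_disjoint G i).1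

lemma notMem_explored_of_mem_stackAt (h : v ∈ stackAt G i) : v ∉ (dfsState G i).2 :=
  (stackAt_nodup_and_disjoint G i).2 v h

lemma head_or_mem_stackAt_succ (h : v ∈ stackAt G i) :
    (stackAt G i).head? = some v ∨ v ∈ stackAt G (i + 1) := by
  rcases hst : dfsState G i with ⟨_ | ⟨u, r⟩, A⟩
  · simp [stackAt, hst] at h
  · rw [stackAt, hst] at h ⊢
    rcases List.mem_cons.1 h with rfl | h
    · exact Or.inl rfl
    · exact Or.inr (by simp [stackAt_succ_of_eq_cons hst, h])

lemma mem_explored_succ_of_head (h : (stackAt G i).head? = some v) :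
    v ∈ (dfsState G (i + 1)).2 := by
  rw [dfsState_succ_of_eq_cons (dfsState_eq_cons_of_stackAt (List.eq_cons_of_mem_head? h))]
  exact Finset.mem_insert_self _ _

lemma eq_of_head_eq (hi : (stackAt G i).head? = some v) (hj : (stackAt G j).head? = some v) :
    i = j := by
  by_contra hne
  wlog hlt : i < j generalizing i j
  · exact this hj hi (Ne.symm hne) (by omega)
  exact notMem_explored_of_mem_stackAt (List.mem_of_mem_head? hj)
    (explored_mono G hlt (mem_explored_succ_of_head hi))

lemma exists_head_of_mem_explored (h : v ∈ (dfsState G j).2) :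
    ∃ i < j, (stackAt G i).head? = some v := by
  induction j with
  | zero => simp [explored_zero] at h
  | succ j ih =>
    rcases hst : dfsState G j with ⟨_ | ⟨u, r⟩, A⟩
    · rw [dfsState_succ_of_stackAt_eq_nil (by rw [stackAt, hst])] at h
      obtain ⟨i, hi, hv⟩ := ih h
      exact ⟨i, by omega, hv⟩
    · rw [dfsState_succ_of_eq_cons hst, Finset.mem_insert] at h
      rcases h with rfl | h
      · exact ⟨j, by omega, by rw [stackAt, hst]; rfl⟩
      · obtain ⟨i, hi, hv⟩ := ih (by rw [hst]; exact h)
        exact ⟨i, by omega, hv⟩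

lemma mem_seenAt_of_adj (hu : u ∈ (dfsState G i).2) (h : G.Adj u w) : w ∈ seenAt G i := by
  induction i with
  | zero => simp [explored_zero] at hu
  | succ i ih =>
    rcases hst : dfsState G i with ⟨_ | ⟨v, r⟩, A⟩
    · have hnil : stackAt G i = [] := by rw [stackAt, hst]
      rw [dfsState_succ_of_stackAt_eq_nil hnil] at hu
      rw [seenAt_succ, newNbrs_of_stackAt_eq_nil hnil, Finset.union_empty]
      exact ih hu
    · rw [dfsState_succ_of_eq_cons hst, Finset.mem_insert] at hu
      rw [seenAt_succ, Finset.mem_union]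
      rcases hu with rfl | hu
      · by_contra hw
        simp only [not_or, seenAt, stackAt, hst, Finset.mem_union, List.mem_toFinset] at hw
        exact hw.2 (mem_newNbrs_iff.2 ⟨u, r, A, hst, h, hw.1⟩)
      · exact Or.inl (ih (by rw [hst]; exact hu))

end Exploration

section Connected

variable {G : SimpleGraph (Fin n)} {i j : ℕ} {u v w : Fin n}

lemma stackAt_zero_ne_nil (hG : G.Connected) : stackAt G 0 ≠ [] := by
  have : 0 < n := Fin.pos_iff_nonempty.2 hG.nonempty
  simp [stackAt, dfsState]
  omega

lemma explored_eq_univ_of_stackAt_eq_nil (hG : G.Connected) (h : stackAt G i = []) :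
    (dfsState G i).2 = Finset.univ := by
  have hseen : seenAt G i = (dfsState G i).2 := by simp [seenAt, h]
  obtain ⟨v₀, r, hv₀⟩ := List.ne_nil_iff_exists_cons.1 (stackAt_zero_ne_nil hG)
  have hroot : v₀ ∈ (dfsState G i).2 :=
    hseen ▸ seenAt_mono G (Nat.zero_le i) (by simp [seenAt, hv₀])
  have hclosed : ∀ {x y}, G.Walk x y → x ∈ (dfsState G i).2 → y ∈ (dfsState G i).2 := by
    intro x y p
    induction p with
    | nil => exact id
    | cons hadj _ ih => exact fun hx => ih (hseen ▸ mem_seenAt_of_adj hx hadj)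
  exact Finset.eq_univ_of_forall fun v => hclosed (hG.preconnected v₀ v).some hroot

lemma card_explored_and_stackAt_ne_nil (hG : G.Connected) (hi : i ≤ n) :
    (dfsState G i).2.card = i ∧ (i < n → stackAt G i ≠ []) := by
  induction i with
  | zero => exact ⟨by simp [explored_zero], fun _ => stackAt_zero_ne_nil hG⟩
  | succ i ih =>
    obtain ⟨hcard, hne⟩ := ih (by omega)
    obtain ⟨v, r, hl⟩ := List.ne_nil_iff_exists_cons.1 (hne (by omega))
    have hv : v ∉ (dfsState G i).2 := notMem_explored_of_mem_stackAt (by simp [hl])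
    have hcard' : (dfsState G (i + 1)).2.card = i + 1 := by
      rw [dfsState_succ_of_eq_cons (dfsState_eq_cons_of_stackAt hl),
        Finset.card_insert_of_notMem hv, hcard]
    refine ⟨hcard', fun hlt hnil => ?_⟩
    rw [explored_eq_univ_of_stackAt_eq_nil hG hnil, Finset.card_univ, Fintype.card_fin] at hcard'
    omega

lemma stackAt_ne_nil (hG : G.Connected) (hi : i < n) : stackAt G i ≠ [] :=
  (card_explored_and_stackAt_ne_nil hG hi.le).2 hi

lemma explored_eq_univ (hG : G.Connected) : (dfsState G n).2 = Finset.univ :=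
  Finset.eq_univ_of_card _ <| by
    rw [(card_explored_and_stackAt_ne_nil hG le_rfl).1, Fintype.card_fin]

lemma stackAt_eq_nil (hG : G.Connected) (hi : n ≤ i) : stackAt G i = [] := by
  induction i, hi using Nat.le_induction with
  | base =>
    rw [List.eq_nil_iff_forall_not_mem]
    intro v hv
    exact notMem_explored_of_mem_stackAt hv (explored_eq_univ hG ▸ Finset.mem_univ v)
  | succ j _ ih => rwa [stackAt, dfsState_succ_of_stackAt_eq_nil ih]

lemma lt_of_stackAt_ne_nil (hG : G.Connected) (h : stackAt G i ≠ []) : i < n := by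
  by_contra hi
  exact h (stackAt_eq_nil hG (by omega))

def exploreTime (G : SimpleGraph (Fin n)) (v : Fin n) : ℕ :=
  sInf {t | (stackAt G t).head? = some v}

lemma exists_head_eq (hG : G.Connected) (v : Fin n) : ∃ t < n, (stackAt G t).head? = some v :=
  exists_head_of_mem_explored (explored_eq_univ hG ▸ Finset.mem_univ v)

lemma head_stackAt_exploreTime (hG : G.Connected) (v : Fin n) :
    (stackAt G (exploreTime G v)).head? = some v :=
  Nat.sInf_mem ((exists_head_eq hG v).imp fun _ h => h.2)

lemma exploreTime_eq_iff (hG : G.Connected) :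
    exploreTime G v = i ↔ (stackAt G i).head? = some v :=
  ⟨fun h => h ▸ head_stackAt_exploreTime hG v,
    fun h => eq_of_head_eq (head_stackAt_exploreTime hG v) h⟩

lemma exploreTime_lt (hG : G.Connected) (v : Fin n) : exploreTime G v < n := by
  obtain ⟨t, htn, ht⟩ := exists_head_eq hG v
  exact (Nat.sInf_le ht).trans_lt htn

lemma exploreTime_injective (hG : G.Connected) : Function.Injective (exploreTime G) :=
  fun u v h => Option.some_injective _ <| by
    rw [← head_stackAt_exploreTime hG u, ← head_stackAt_exploreTime hG v, h]

lemma mem_explored_iff (hG : G.Connected) : v ∈ (dfsState G i).2 ↔ exploreTime G v < i := by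
  refine ⟨fun h => ?_, fun h => explored_mono G h
    (mem_explored_succ_of_head (head_stackAt_exploreTime hG v))⟩
  obtain ⟨t, ht, hv⟩ := exists_head_of_mem_explored h
  exact (exploreTime_eq_iff hG).2 hv ▸ ht

lemma le_exploreTime_of_mem_stackAt (hG : G.Connected) (h : v ∈ stackAt G i) :
    i ≤ exploreTime G v := by
  by_contra hi
  exact notMem_explored_of_mem_stackAt h ((mem_explored_iff hG).2 (by omega))

lemma mem_stackAt_of_le_exploreTime (hG : G.Connected) (hv : v ∈ stackAt G i) (hij : i ≤ j)
    (hj : j ≤ exploreTime G v) : v ∈ stackAt G j := by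
  induction j, hij using Nat.le_induction with
  | base => exact hv
  | succ j hij ih =>
    refine (head_or_mem_stackAt_succ (ih (by omega))).resolve_left fun h => ?_
    have := (exploreTime_eq_iff hG).2 h
    omega

lemma mem_stackAt_of_mem_seenAt (hG : G.Connected) (hs : v ∈ seenAt G i)
    (hi : i ≤ exploreTime G v) : v ∈ stackAt G i := by
  rcases Finset.mem_union.1 hs with h | h
  · rw [mem_explored_iff hG] at h
    omega
  · exact List.mem_toFinset.1 h

end Connected

section DepthFirstTree

variable {G : SimpleGraph (Fin n)} {i : ℕ} {u v w : Fin n}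

def discoverTime (G : SimpleGraph (Fin n)) (v : Fin n) : ℕ :=
  sInf {i | v ∈ newNbrs G i}

/-- Junk value `v` at the root. -/
def parent (G : SimpleGraph (Fin n)) (v : Fin n) : Fin n :=
  ((stackAt G (discoverTime G v)).head?).getD v

lemma discoverTime_eq (h : v ∈ newNbrs G i) : discoverTime G v = i :=
  eq_of_mem_newNbrs (Nat.sInf_mem (s := {i | v ∈ newNbrs G i}) ⟨i, h⟩) h

lemma head_stackAt_of_mem_newNbrs (h : v ∈ newNbrs G i) :
    (stackAt G i).head? = some (parent G v) := by
  obtain ⟨u, r, A, hst, -⟩ := mem_newNbrs_iff.1 h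
  rw [parent, discoverTime_eq h, stackAt, hst]
  rfl

lemma adj_of_mem_newNbrs (hu : (stackAt G i).head? = some u) (hv : v ∈ newNbrs G i) :
    G.Adj u v := by
  obtain ⟨x, r, A, hst, hadj, -⟩ := mem_newNbrs_iff.1 hv
  obtain rfl : x = u := by simpa [stackAt, hst] using hu
  exact hadj

lemma dfTree_le (G : SimpleGraph (Fin n)) : dfTree G ≤ G := by
  intro u v h
  rcases ((fromRel_adj _ _ _).1 h).2 with ⟨i, -, hu, hv⟩ | ⟨i, -, hv, hu⟩
  · exact adj_of_mem_newNbrs hu hv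
  · exact (adj_of_mem_newNbrs hv hu).symm

lemma lt_exploreTime_of_mem_newNbrs (hG : G.Connected) (h : v ∈ newNbrs G i) :
    i < exploreTime G v :=
  le_exploreTime_of_mem_stackAt hG (mem_stackAt_succ_of_mem_newNbrs h)

lemma exploreTime_parent (hG : G.Connected) (h : v ∈ newNbrs G i) :
    exploreTime G (parent G v) = i :=
  (exploreTime_eq_iff hG).2 (head_stackAt_of_mem_newNbrs h)

/-- `0 < exploreTime G v` is how "`v` is not the root" is expressed throughout. -/
lemma exists_mem_newNbrs_iff (hG : G.Connected) :
    (∃ i, v ∈ newNbrs G i) ↔ 0 < exploreTime G v := by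
  refine ⟨fun ⟨i, h⟩ => (Nat.zero_le i).trans_lt (lt_exploreTime_of_mem_newNbrs hG h),
    fun hv => ?_⟩
  have h₀ : v ∉ seenAt G 0 := fun h => by
    rw [seenAt, explored_zero, Finset.empty_union, List.mem_toFinset] at h
    exact hv.ne' ((exploreTime_eq_iff hG).2 (head_stackAt_zero_of_mem h))
  have hseen : v ∈ seenAt G (exploreTime G v) := by
    simp [seenAt, List.mem_of_mem_head? (head_stackAt_exploreTime hG v)]
  obtain ⟨k, -, hk⟩ := exists_mem_newNbrs_of_mem_seenAt h₀ hseen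
  exact ⟨k, hk⟩

lemma mem_newNbrs_discoverTime (hG : G.Connected) (hv : 0 < exploreTime G v) :
    v ∈ newNbrs G (discoverTime G v) :=
  Nat.sInf_mem ((exists_mem_newNbrs_iff hG).2 hv)

lemma exploreTime_parent_lt (hG : G.Connected) (hv : 0 < exploreTime G v) :
    exploreTime G (parent G v) < exploreTime G v := by
  have h := mem_newNbrs_discoverTime hG hv
  rw [exploreTime_parent hG h]
  exact lt_exploreTime_of_mem_newNbrs hG h

lemma dfTree_rel_iff (hG : G.Connected) :
    (∃ i < n, (stackAt G i).head? = some u ∧ v ∈ newNbrs G i) ↔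
      0 < exploreTime G v ∧ u = parent G v := by
  constructor
  · rintro ⟨i, -, hu, hv⟩
    refine ⟨(exists_mem_newNbrs_iff hG).1 ⟨i, hv⟩, Option.some_injective _ ?_⟩
    rw [← hu, head_stackAt_of_mem_newNbrs hv]
  · rintro ⟨hv, rfl⟩
    have h := mem_newNbrs_discoverTime hG hv
    exact ⟨_, exploreTime_parent hG h ▸ exploreTime_lt hG _, head_stackAt_of_mem_newNbrs h, h⟩

lemma dfTree_adj_iff (hG : G.Connected) :
    (dfTree G).Adj u v ↔
      (0 < exploreTime G v ∧ u = parent G v) ∨ (0 < exploreTime G u ∧ v = parent G u) := by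
  rw [dfTree, fromRel_adj, dfTree_rel_iff hG, dfTree_rel_iff hG, and_iff_right_iff_imp]
  rintro (⟨hv, rfl⟩ | ⟨hu, rfl⟩) h
  · exact (exploreTime_parent_lt hG hv).ne (congrArg _ h)
  · exact (exploreTime_parent_lt hG hu).ne (congrArg _ h.symm)

lemma exists_exploreTime_eq_zero (hG : G.Connected) : ∃ v₀, exploreTime G v₀ = 0 := by
  obtain ⟨v₀, r, h⟩ := List.ne_nil_iff_exists_cons.1 (stackAt_zero_ne_nil hG)
  exact ⟨v₀, (exploreTime_eq_iff hG).2 (by rw [h]; rfl)⟩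

lemma dfTree_connected (hG : G.Connected) : (dfTree G).Connected := by
  obtain ⟨v₀, hv₀⟩ := exists_exploreTime_eq_zero hG
  have hreach : ∀ k v, exploreTime G v = k → (dfTree G).Reachable v₀ v := by
    intro k
    induction k using Nat.strong_induction_on with
    | _ k ih =>
      rintro v rfl
      rcases Nat.eq_zero_or_pos (exploreTime G v) with h | h
      · rw [exploreTime_injective hG (h.trans hv₀.symm)]
      · exact (ih _ (exploreTime_parent_lt hG h) _ rfl).trans
          ((dfTree_adj_iff hG).2 (Or.inl ⟨h, rfl⟩)).reachable
  have := hG.nonempty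
  exact ⟨fun u v => (hreach _ u rfl).symm.trans (hreach _ v rfl)⟩

lemma dfTree_edgeFinset (hG : G.Connected) :
    (dfTree G).edgeFinset =
      (Finset.univ.filter (0 < exploreTime G ·)).image fun v => s(parent G v, v) := by
  ext ⟨u, v⟩
  simp only [mem_edgeFinset, mem_edgeSet, dfTree_adj_iff hG, Finset.mem_image, Finset.mem_filter,
    Finset.mem_univ, true_and, Sym2.eq_iff]
  constructor
  · rintro (⟨hv, rfl⟩ | ⟨hu, rfl⟩)
    · exact ⟨v, hv, Or.inl ⟨rfl, rfl⟩⟩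
    · exact ⟨u, hu, Or.inr ⟨rfl, rfl⟩⟩
  · rintro ⟨x, hx, ⟨rfl, rfl⟩ | ⟨rfl, rfl⟩⟩
    · exact Or.inl ⟨hx, rfl⟩
    · exact Or.inr ⟨hx, rfl⟩

lemma card_dfTree_edgeFinset (hG : G.Connected) : (dfTree G).edgeFinset.card = n - 1 := by
  obtain ⟨v₀, hv₀⟩ := exists_exploreTime_eq_zero hG
  have hroot : Finset.univ.filter (0 < exploreTime G ·) = Finset.univ.erase v₀ := by
    ext v
    simp only [Finset.mem_filter, Finset.mem_univ, true_and, Finset.mem_erase, and_true,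
      Nat.pos_iff_ne_zero]
    rw [← hv₀]
    exact (exploreTime_injective hG).ne_iff
  rw [dfTree_edgeFinset hG, Finset.card_image_of_injOn, hroot, Finset.card_erase_of_mem
    (Finset.mem_univ _), Finset.card_univ, Fintype.card_fin]
  intro a ha b hb hab
  rcases Sym2.eq_iff.1 hab with ⟨-, h⟩ | ⟨h₁, h₂⟩
  · exact h
  · have ha' := exploreTime_parent_lt hG (Finset.mem_filter.1 ha).2
    have hb' := exploreTime_parent_lt hG (Finset.mem_filter.1 hb).2
    rw [h₁] at ha'
    rw [← h₂] at hb'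
    omega

lemma dfTree_isTree (hG : G.Connected) : (dfTree G).IsTree := by
  rw [isTree_iff_connected_and_card, Nat.card_eq_fintype_card, ← edgeFinset_card,
    card_dfTree_edgeFinset hG, Nat.card_eq_fintype_card, Fintype.card_fin]
  have := Fin.pos_iff_nonempty.2 hG.nonempty
  exact ⟨dfTree_connected hG, by omega⟩

end DepthFirstTree

section RunInvariance

variable {G H T : SimpleGraph (Fin n)}

lemma dfsState_eq_of_unseen_nbrs_eq
    (h : ∀ i v r A, dfsState G i = (v :: r, A) →
      (H.neighborFinset v).filter (fun w => w ∉ A ∧ w ∉ v :: r) =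
        (G.neighborFinset v).filter (fun w => w ∉ A ∧ w ∉ v :: r))
    (i : ℕ) : dfsState H i = dfsState G i := by
  induction i with
  | zero => rfl
  | succ i ih =>
    rcases hst : dfsState G i with ⟨_ | ⟨v, r⟩, A⟩
    · rw [dfsState_succ, dfsState_succ, ih, hst]
      rfl
    · rw [dfsState_succ_of_eq_cons hst, dfsState_succ_of_eq_cons (ih.trans hst), h i v r A hst]

lemma dfTree_eq_of_unseen_nbrs_eq
    (h : ∀ i v r A, dfsState G i = (v :: r, A) →
      (H.neighborFinset v).filter (fun w => w ∉ A ∧ w ∉ v :: r) =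
        (G.neighborFinset v).filter (fun w => w ∉ A ∧ w ∉ v :: r)) :
    dfTree H = dfTree G := by
  have hrun := dfsState_eq_of_unseen_nbrs_eq h
  have hnew : ∀ i, newNbrs H i = newNbrs G i := fun i => by
    rcases hst : dfsState G i with ⟨_ | ⟨v, r⟩, A⟩
    · rw [newNbrs_of_stackAt_eq_nil (by rw [stackAt, hrun, hst]),
        newNbrs_of_stackAt_eq_nil (by rw [stackAt, hst])]
    · rw [newNbrs_of_eq_cons hst, newNbrs_of_eq_cons ((hrun i).trans hst), h i v r A hst]
  simp only [dfTree, stackAt, hrun, hnew]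

lemma dfTree_unseen_nbrs_eq (hG : G.Connected) {i : ℕ} {v : Fin n} {r : List (Fin n)}
    {A : Finset (Fin n)} (hst : dfsState G i = (v :: r, A)) :
    ((dfTree G).neighborFinset v).filter (fun w => w ∉ A ∧ w ∉ v :: r) =
      (G.neighborFinset v).filter (fun w => w ∉ A ∧ w ∉ v :: r) := by
  ext w
  simp only [Finset.mem_filter, mem_neighborFinset, and_congr_left_iff]
  refine fun hw => ⟨fun h => dfTree_le G h, fun hadj => ?_⟩
  have hhead : (stackAt G i).head? = some v := by rw [stackAt, hst]; rfl
  have hi : i < n := lt_of_stackAt_ne_nil hG (by simp [stackAt, hst])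
  rw [dfTree, fromRel_adj]
  exact ⟨fun h => hw.2 (h ▸ List.mem_cons_self),
    Or.inl ⟨i, hi, hhead, mem_newNbrs_iff.2 ⟨v, r, A, hst, hadj, hw⟩⟩⟩

lemma dfsState_dfTree (hG : G.Connected) (i : ℕ) : dfsState (dfTree G) i = dfsState G i :=
  dfsState_eq_of_unseen_nbrs_eq (fun _ _ _ _ => dfTree_unseen_nbrs_eq hG) i

lemma unseen_nbrs_eq_of_adj_permitted (hT : T.Connected) (hTH : T ≤ H)
    (hH : ∀ ⦃v w⦄, H.Adj v w → ¬ T.Adj v w → s(v, w) ∈ permittedSet T)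
    {i : ℕ} {v : Fin n} {r : List (Fin n)} {A : Finset (Fin n)}
    (hst : dfsState T i = (v :: r, A)) :
    (H.neighborFinset v).filter (fun w => w ∉ A ∧ w ∉ v :: r) =
      (T.neighborFinset v).filter (fun w => w ∉ A ∧ w ∉ v :: r) := by
  ext w
  simp only [Finset.mem_filter, mem_neighborFinset, and_congr_left_iff]
  refine fun ⟨hwA, hwr⟩ => ⟨fun hadj => by_contra fun hT' => ?_, fun h => hTH h⟩
  obtain ⟨x, y, hxy, -, -, j, -, hx, hy⟩ := hH hadj hT'
  obtain ⟨hv, hw⟩ : v ∈ stackAt T j ∧ w ∈ stackAt T j := by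
    rcases Sym2.eq_iff.1 hxy with ⟨rfl, rfl⟩ | ⟨rfl, rfl⟩
    · exact ⟨hx, hy⟩
    · exact ⟨hy, hx⟩
  have hji : j ≤ i := (exploreTime_eq_iff hT).2 (by rw [stackAt, hst]; rfl) ▸
    le_exploreTime_of_mem_stackAt hT hv
  have hseen : w ∈ seenAt T i := seenAt_mono T hji (by simp [seenAt, hw])
  simp only [seenAt, stackAt, hst, Finset.mem_union, List.mem_toFinset] at hseen
  exact hseen.elim hwA hwr

lemma dfTree_eq_of_adj_permitted (hT : T.Connected) (hTH : T ≤ H)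
    (hH : ∀ ⦃v w⦄, H.Adj v w → ¬ T.Adj v w → s(v, w) ∈ permittedSet T) :
    dfTree H = dfTree T :=
  dfTree_eq_of_unseen_nbrs_eq fun _ _ _ _ => unseen_nbrs_eq_of_adj_permitted hT hTH hH

end RunInvariance

section PermittedEdges

variable {G T : SimpleGraph (Fin n)} {i : ℕ} {u w : Fin n} {r : List (Fin n)}

lemma dfTree_eq_self (hT : T.IsTree) : dfTree T = T := by
  have hcard := hT.card_edgeFinset
  rw [Fintype.card_fin] at hcard
  refine edgeFinset_inj.1 (Finset.eq_of_subset_of_card_le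
    (edgeFinset_mono (dfTree_le T)) ?_)
  rw [card_dfTree_edgeFinset hT.connected]
  omega

lemma mk_mem_permittedSet_dfTree (hG : G.Connected) {a b : Fin n} (hadj : G.Adj a b)
    (hnt : ¬ (dfTree G).Adj a b) : s(a, b) ∈ permittedSet (dfTree G) := by
  wlog hlt : exploreTime G a < exploreTime G b generalizing a b
  · have hne : exploreTime G a ≠ exploreTime G b := (exploreTime_injective hG).ne hadj.ne
    rw [Sym2.eq_swap]
    exact this hadj.symm (fun h => hnt h.symm) (by omega)
  set i := exploreTime G a
  have hhead : (stackAt G i).head? = some a := head_stackAt_exploreTime hG a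
  obtain ⟨r, hl⟩ : ∃ r, stackAt G i = a :: r := ⟨_, List.eq_cons_of_mem_head? hhead⟩
  have hb : b ∈ seenAt G i := by
    by_contra hb
    simp only [seenAt, Finset.mem_union, List.mem_toFinset, not_or] at hb
    refine hnt ((fromRel_adj _ _ _).2 ⟨hadj.ne, Or.inl ⟨i, exploreTime_lt hG a,
      hhead, mem_newNbrs_iff.2 ⟨a, r, _, dfsState_eq_cons_of_stackAt hl, hadj, hb.1, ?_⟩⟩⟩)
    exact hl ▸ hb.2
  refine ⟨a, b, rfl, hadj.ne, hnt, i, exploreTime_lt hG a, ?_, ?_⟩ <;>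
    rw [stackAt, dfsState_dfTree hG]
  · exact List.mem_of_mem_head? hhead
  · exact mem_stackAt_of_mem_seenAt hG hb hlt.le

lemma exploreTime_lt_of_mem_tail (hG : G.Connected) (hl : stackAt G i = u :: r) (hw : w ∈ r) :
    exploreTime G u < exploreTime G w := by
  have hu : exploreTime G u = i := (exploreTime_eq_iff hG).2 (by rw [hl]; rfl)
  have hi : i ≤ exploreTime G w := le_exploreTime_of_mem_stackAt hG (by simp [hl, hw])
  have hwu : exploreTime G w ≠ exploreTime G u := (exploreTime_injective hG).ne fun h =>
    (List.nodup_cons.1 (hl ▸ stackAt_nodup G i)).1 (h ▸ hw)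
  omega

lemma not_adj_of_mem_tail (hT : T.IsTree) (hl : stackAt T i = u :: r) (hw : w ∈ r) :
    ¬ T.Adj u w := by
  have hT' := hT.connected
  have hlt := exploreTime_lt_of_mem_tail hT' hl hw
  rw [← dfTree_eq_self hT, dfTree_adj_iff hT']
  rintro (⟨hw₀, rfl⟩ | ⟨hu₀, rfl⟩)
  · have hnew := mem_newNbrs_discoverTime hT' hw₀
    have hi : discoverTime T w = i := by
      rw [← exploreTime_parent hT' hnew, exploreTime_eq_iff hT', hl]
      rfl
    rw [hi] at hnew
    exact notMem_seenAt_of_mem_newNbrs hnew (by simp [seenAt, hl, hw])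
  · exact (exploreTime_parent_lt hT' hu₀).not_gt hlt

lemma notMem_edgeSet_and_not_isDiag_of_mem_permittedSet {e : Sym2 (Fin n)}
    (he : e ∈ permittedSet T) : e ∉ T.edgeSet ∧ ¬ e.IsDiag := by
  obtain ⟨u, v, rfl, hne, hnadj, -⟩ := he
  exact ⟨hnadj, Sym2.mk_isDiag_iff.not.2 hne⟩

lemma mk_mem_permittedSet_of_mem_tail (hT : T.IsTree) (hi : i < n) (hl : stackAt T i = u :: r)
    (hw : w ∈ r) : s(u, w) ∈ permittedSet T :=
  ⟨u, w, rfl, fun h => (exploreTime_lt_of_mem_tail hT.connected hl hw).ne (congrArg _ h),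
    not_adj_of_mem_tail hT hl hw, i, hi, by simp [hl], by simp [hl, hw]⟩

lemma exists_mem_tail_of_mem_permittedSet (hT : T.Connected) {e : Sym2 (Fin n)}
    (he : e ∈ permittedSet T) :
    ∃ i ∈ Finset.Ico 1 n, ∃ u r w, stackAt T i = u :: r ∧ w ∈ r ∧ e = s(u, w) := by
  obtain ⟨u, w, rfl, hne, -, j, -, hu, hw⟩ := he
  wlog hlt : exploreTime T u < exploreTime T w generalizing u w
  · have hne' := (exploreTime_injective hT).ne hne
    rw [Sym2.eq_swap]
    exact this w u hne.symm hw hu (by omega)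
  set i := exploreTime T u
  obtain ⟨r, hl⟩ : ∃ r, stackAt T i = u :: r :=
    ⟨_, List.eq_cons_of_mem_head? (head_stackAt_exploreTime hT u)⟩
  have hji : j ≤ i := le_exploreTime_of_mem_stackAt hT hu
  have hwr : w ∈ r := by
    have := mem_stackAt_of_le_exploreTime hT hw hji hlt.le
    rw [hl, List.mem_cons] at this
    exact this.resolve_left hne.symm
  refine ⟨i, Finset.mem_Ico.2 ⟨Nat.one_le_iff_ne_zero.2 fun h0 => ?_, exploreTime_lt hT u⟩,
    u, r, w, hl, hwr, rfl⟩
  have hlen : (stackAt T i).length ≤ 1 := by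
    rw [h0]
    simp [stackAt, dfsState]
  rw [hl, List.length_cons] at hlen
  exact List.ne_nil_of_mem hwr (List.eq_nil_of_length_eq_zero (by omega))

lemma eq_and_eq_of_mk_eq_of_mem_tail (hT : T.Connected) {i i' : ℕ} {u u' w w' : Fin n}
    {r' : List (Fin n)} (hl : stackAt T i = u :: r) (hw : w ∈ r) (hl' : stackAt T i' = u' :: r')
    (hw' : w' ∈ r') (h : s(u, w) = s(u', w')) : i = i' ∧ w = w' := by
  have hu : exploreTime T u = i := (exploreTime_eq_iff hT).2 (by rw [hl]; rfl)
  have hu' : exploreTime T u' = i' := (exploreTime_eq_iff hT).2 (by rw [hl']; rfl)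
  rcases Sym2.eq_iff.1 h with ⟨rfl, rfl⟩ | ⟨rfl, rfl⟩
  · exact ⟨hu.symm.trans hu', rfl⟩
  · have := exploreTime_lt_of_mem_tail hT hl hw
    have := exploreTime_lt_of_mem_tail hT hl' hw'
    omega

lemma card_sigma_tail_stackAt (T : SimpleGraph (Fin n)) :
    ((Finset.Ico 1 n).sigma fun i => (stackAt T i).tail.toFinset).card = area T := by
  rw [Finset.card_sigma, area]
  refine Finset.sum_congr rfl fun i _ => ?_
  rw [List.toFinset_card_of_nodup (stackAt_nodup T i).tail, List.length_tail, dfw]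

lemma card_permittedSet (hT : T.IsTree) :
    (Finset.univ.filter (· ∈ permittedSet T)).card = area T := by
  have hT' := hT.connected
  have := hT'.nonempty
  inhabit Fin n
  rw [← card_sigma_tail_stackAt]
  symm
  refine Finset.card_bij (fun a _ => s((stackAt T a.1).headI, a.2)) ?_ ?_ ?_
  · rintro ⟨i, w⟩ h
    simp only [Finset.mem_sigma, Finset.mem_Ico, List.mem_toFinset] at h
    obtain ⟨⟨-, hi⟩, hw⟩ := h
    obtain ⟨u, r, hl⟩ := List.ne_nil_iff_exists_cons.1 (stackAt_ne_nil hT' hi)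
    rw [hl] at hw ⊢
    simpa using mk_mem_permittedSet_of_mem_tail hT hi hl hw
  · rintro ⟨i, w⟩ h ⟨i', w'⟩ h' he
    simp only [Finset.mem_sigma, Finset.mem_Ico, List.mem_toFinset] at h h'
    obtain ⟨u, r, hl⟩ := List.ne_nil_iff_exists_cons.1 (stackAt_ne_nil hT' h.1.2)
    obtain ⟨u', r', hl'⟩ := List.ne_nil_iff_exists_cons.1 (stackAt_ne_nil hT' h'.1.2)
    rw [hl] at h he
    rw [hl'] at h' he
    obtain ⟨rfl, rfl⟩ := eq_and_eq_of_mk_eq_of_mem_tail hT' hl h.2 hl' h'.2 he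
    rfl
  · intro e he
    obtain ⟨i, hi, u, r, w, hl, hw, rfl⟩ :=
      exists_mem_tail_of_mem_permittedSet hT' (Finset.mem_filter.1 he).2
    exact ⟨⟨i, w⟩, Finset.mem_sigma.2 ⟨hi, by simp [hl, hw]⟩, by simp [hl]⟩

end PermittedEdges

section Counting

variable {G T : SimpleGraph (Fin n)}

lemma dfTree_eq_iff (hT : T.IsTree) :
    G.Connected ∧ dfTree G = T ↔
      T ≤ G ∧ G.edgeSet \ T.edgeSet ⊆ permittedSet T := by
  constructor
  · rintro ⟨hG, rfl⟩
    refine ⟨dfTree_le G, fun e ⟨he, hne⟩ => ?_⟩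
    induction e using Sym2.ind
    exact mk_mem_permittedSet_dfTree hG he hne
  · rintro ⟨hTG, hG⟩
    exact ⟨hT.connected.mono hTG, (dfTree_eq_of_adj_permitted hT.connected hTG
      fun _ _ h h' => hG ⟨h, h'⟩).trans (dfTree_eq_self hT)⟩

lemma surplus_eq_card_sdiff (hT : T.IsTree) (hTG : T ≤ G) :
    surplus G = ((G.edgeFinset \ T.edgeFinset).card : ℤ) := by
  have hcard := hT.card_edgeFinset
  have hle := Finset.card_le_card (edgeFinset_mono hTG)
  rw [Fintype.card_fin] at hcard
  rw [surplus, ← coe_edgeFinset, Set.ncard_coe_finset,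
    Finset.card_sdiff_of_subset (edgeFinset_mono hTG)]
  omega

lemma sum_weight_dfTree_eq_sum_powerset (p : ℝ) (hT : T.IsTree) :
    ∑ G ∈ (Finset.univ.filter fun G : SimpleGraph (Fin n) => G.Connected).filter
        (dfTree · = T), p ^ surplus G * (1 - p) ^ (-surplus G) =
      ∑ S ∈ (Finset.univ.filter (· ∈ permittedSet T)).powerset, (p / (1 - p)) ^ S.card := by
  have hP : ∀ S : Finset (Sym2 (Fin n)),
      S ∈ (Finset.univ.filter (· ∈ permittedSet T)).powerset ↔ ↑S ⊆ permittedSet T := by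
    intro S
    simp [Set.subset_def, Finset.subset_iff]
  have hfiber : ∀ G, G ∈ (Finset.univ.filter fun G : SimpleGraph (Fin n) => G.Connected).filter
      (dfTree · = T) ↔ T ≤ G ∧ G.edgeSet \ T.edgeSet ⊆ permittedSet T := fun G => by
    rw [Finset.mem_filter, Finset.mem_filter, and_iff_right (Finset.mem_univ _), dfTree_eq_iff hT]
  have hadd : ∀ S : Finset (Sym2 (Fin n)), ↑S ⊆ permittedSet T →
      (T ⊔ fromEdgeSet ↑S).edgeSet \ T.edgeSet = ↑S := fun S hS =>
    edgeSet_sup_fromEdgeSet_sdiff fun e he =>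
      notMem_edgeSet_and_not_isDiag_of_mem_permittedSet (hS he)
  refine Finset.sum_nbij' (fun G => G.edgeFinset \ T.edgeFinset) (fun S => T ⊔ fromEdgeSet ↑S)
    (fun G hG => ?_) (fun S hS => ?_) (fun G hG => ?_) (fun S hS => ?_) (fun G hG => ?_)
  · rw [hP, Finset.coe_sdiff, coe_edgeFinset, coe_edgeFinset]
    exact ((hfiber G).1 hG).2
  · rw [hfiber, hadd S ((hP S).1 hS)]
    exact ⟨le_sup_left, (hP S).1 hS⟩
  · rw [Finset.coe_sdiff, coe_edgeFinset, coe_edgeFinset]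
    exact sup_fromEdgeSet_sdiff ((hfiber G).1 hG).1
  · rw [← Finset.coe_inj, Finset.coe_sdiff, coe_edgeFinset, coe_edgeFinset]
    exact hadd S ((hP S).1 hS)
  · rw [surplus_eq_card_sdiff hT ((hfiber G).1 hG).1, zpow_neg, zpow_natCast, zpow_natCast,
      div_pow, div_eq_mul_inv]

lemma sum_weight_dfTree_eq {p : ℝ} (hp : p ≠ 1) (hT : T.IsTree) :
    ∑ G ∈ (Finset.univ.filter fun G : SimpleGraph (Fin n) => G.Connected).filter
        (dfTree · = T), p ^ surplus G * (1 - p) ^ (-surplus G) = treeWeight p T := by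
  have h1p : 1 - p ≠ 0 := sub_ne_zero.2 hp.symm
  have hsum := Finset.sum_pow_mul_eq_add_pow (p / (1 - p)) 1
    (Finset.univ.filter (· ∈ permittedSet T))
  simp only [one_pow, mul_one] at hsum
  rw [sum_weight_dfTree_eq_sum_powerset p hT, hsum, card_permittedSet hT, treeWeight, zpow_neg,
    zpow_natCast, ← inv_pow]
  congr 1
  field_simp
  ring

lemma sum_treeWeight_eq_sum_weight {p : ℝ} (hp : p ≠ 1) :
    ∑ T ∈ Finset.univ.filter (fun T : SimpleGraph (Fin n) => T.IsTree), treeWeight p T =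
      ∑ G ∈ Finset.univ.filter (fun G : SimpleGraph (Fin n) => G.Connected),
        p ^ surplus G * (1 - p) ^ (-surplus G) := by
  symm
  rw [← Finset.sum_fiberwise_of_maps_to (g := dfTree)
    (t := Finset.univ.filter fun T : SimpleGraph (Fin n) => T.IsTree) fun G hG => by
      simpa using dfTree_isTree (Finset.mem_filter.1 hG).2]
  exact Finset.sum_congr rfl fun T hT => sum_weight_dfTree_eq hp (Finset.mem_filter.1 hT).2

end Counting

end RandomGraphs

open RandomGraphs in
theorem twoStage_eq_conditioned_component_general (m : ℕ)
    (p : ℝ) (hp1 : p < 1)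
    (G : SimpleGraph (Fin m)) :
    twoStageProb p G =
      p ^ surplus G * (1 - p) ^ (-(surplus G)) /
        ∑ G' ∈ Finset.univ.filter
            (fun G' : SimpleGraph (Fin m) => G'.Connected),
          p ^ surplus G' * (1 - p) ^ (-(surplus G')) := by
  have h1p : 1 - p ≠ 0 := sub_ne_zero.2 hp1.ne'
  have hweight : treeWeight p (dfTree G) * (1 - p) ^ ((area (dfTree G) : ℤ) - surplus G) =
      (1 - p) ^ (-surplus G) := by
    rw [treeWeight, ← zpow_add₀ h1p]
    ring_nf
  rw [twoStageProb, sum_treeWeight_eq_sum_weight hp1.ne, ← hweight]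
  ring

open RandomGraphs in
/-- Fix `p ∈ (0,1)` and `m ≥ 1`.  The random connected graph
`G̃` on `[m]` generated by first choosing a tree `T̃` with probability
proportional to `(1-p)^{-a(T)}` and then adding each of the `a(T̃)` edges
permitted by `oDFS(T̃)` independently with probability `p` has the same
distribution as a connected graph on `[m]` chosen with probability
proportional to `p^{s(G)} (1-p)^{-s(G)}`, i.e. as a connected component of
`G(n,p)` conditioned to have `m` vertices (relabeled by `[m]`). -/
theorem twoStage_eq_conditioned_component (m : ℕ) (hm : 1 ≤ m)
    (p : ℝ) (hp0 : 0 < p) (hp1 : p < 1)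
    (G : SimpleGraph (Fin m)) (hG : G.Connected) :
    twoStageProb p G =
      p ^ surplus G * (1 - p) ^ (-(surplus G)) /
        ∑ G' ∈ Finset.univ.filter
            (fun G' : SimpleGraph (Fin m) => G'.Connected),
          p ^ surplus G' * (1 - p) ^ (-(surplus G')) :=
  twoStage_eq_conditioned_component_general m p hp1 G
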